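/- Let n ≥ 5 and let a league outcome with n teams be tied with common score p. If p ≥ 2n−1, then for every team A, (n−1)·p − P̄(A) ≥ 2(n−1)(n−2) + 3. -/

import Mathlib

open Finset

inductive MatchResult : Type
  | homeWin : MatchResult
  | draw : MatchResult
  | awayWin : MatchResult
  deriving DecidableEq

instance instFintypeMatchResult : Fintype MatchResult :=
  ⟨{.homeWin, .draw, .awayWin}, fun x => by cases x <;> simp⟩

/-- A league outcome: a result for each ordered pair of distinct teams
(the first component is the home team). -/
abbrev LeagueOutcome (n : ℕ) : Type :=
  {p : Fin n × Fin n // p.1 ≠ p.2} → MatchResult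

/-- Points earned by the home team. -/
def homePts : MatchResult → ℕ
  | .homeWin => 3
  | .draw => 1
  | .awayWin => 0

/-- Points earned by the away team. -/
def awayPts : MatchResult → ℕ
  | .homeWin => 0
  | .draw => 1
  | .awayWin => 3

/-- Total points of team `i`: sum over all matches of the points `i` earns in them. -/
def totalPoints {n : ℕ} (r : LeagueOutcome n) (i : Fin n) : ℕ :=
  ∑ m : {p : Fin n × Fin n // p.1 ≠ p.2},
    ((if m.val.1 = i then homePts (r m) else 0) +
     (if m.val.2 = i then awayPts (r m) else 0))

/-- Total points the other teams earn in their matches against team `i`. -/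
def oppPoints {n : ℕ} (r : LeagueOutcome n) (i : Fin n) : ℕ :=
  ∑ m : {p : Fin n × Fin n // p.1 ≠ p.2},
    ((if m.val.1 = i then awayPts (r m) else 0) +
     (if m.val.2 = i then homePts (r m) else 0))

/-- Number of matches that team `i` wins. -/
def wins {n : ℕ} (r : LeagueOutcome n) (i : Fin n) : ℕ :=
  (Finset.univ.filter (fun m : {p : Fin n × Fin n // p.1 ≠ p.2} =>
    (m.val.1 = i ∧ r m = .homeWin) ∨ (m.val.2 = i ∧ r m = .awayWin))).card

/-- Number of matches that team `i` draws. -/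
def draws {n : ℕ} (r : LeagueOutcome n) (i : Fin n) : ℕ :=
  (Finset.univ.filter (fun m : {p : Fin n × Fin n // p.1 ≠ p.2} =>
    (m.val.1 = i ∨ m.val.2 = i) ∧ r m = .draw)).card

/-- Number of matches that team `i` loses. -/
def losses {n : ℕ} (r : LeagueOutcome n) (i : Fin n) : ℕ :=
  (Finset.univ.filter (fun m : {p : Fin n × Fin n // p.1 ≠ p.2} =>
    (m.val.1 = i ∧ r m = .awayWin) ∨ (m.val.2 = i ∧ r m = .homeWin))).card

/-!
Write `W i`, `d i`, `L i` for the wins, draws and losses of team `i`. In a tied league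
`3 W i + d i = p` and `W i + d i + L i = 2(n-1)` give `2 W i = q + L i` with
`q = p - 2(n-1) ≥ 1`; summing over all teams, exactly `n q` matches are decisive.
Now `(n-1) p - P̄(A)` is the number of points earned in the matches not involving `A`, namely
`2(n-1)(n-2) + D` where `D` is the number of decisive ones, so it suffices to show `D ≥ 3`.
As `A` plays `2(n-1) - d A` decisive matches, `D = n q - 2(n-1) + d A`, which settles `q ≥ 3`.
For `q = 1` every other team wins some match, so `L A + D ≥ n - 1`, and with `A`'s own equation
this forces `D ≥ n - 2`. For `q = 2` it remains to exclude `d A = 0`: then every other team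
wins a match outside `A` or loses two of them, so `3 D ≥ 2(n-1)`.
-/

section Pairwise

variable {n : ℕ} (r : LeagueOutcome n)

def winsOver (i j : Fin n) : ℕ :=
  #{m : {p : Fin n × Fin n // p.1 ≠ p.2} |
    (m.val.1 = i ∧ m.val.2 = j ∧ r m = .homeWin) ∨ (m.val.1 = j ∧ m.val.2 = i ∧ r m = .awayWin)}

def drawsWith (i j : Fin n) : ℕ :=
  #{m : {p : Fin n × Fin n // p.1 ≠ p.2} |
    ((m.val.1 = i ∧ m.val.2 = j) ∨ (m.val.1 = j ∧ m.val.2 = i)) ∧ r m = .draw}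

theorem drawsWith_comm (i j : Fin n) : drawsWith r i j = drawsWith r j i := by
  simp only [drawsWith, or_comm]

theorem wins_eq_sum_winsOver (i : Fin n) : wins r i = ∑ j, winsOver r i j := by
  simp only [wins, winsOver, card_filter]
  rw [sum_comm]
  refine sum_congr rfl fun ⟨⟨a, b⟩, hab⟩ _ => ?_
  cases r ⟨(a, b), hab⟩ <;> by_cases ha : a = i <;> by_cases hb : b = i <;> simp_all

theorem losses_eq_sum_winsOver (i : Fin n) : losses r i = ∑ j, winsOver r j i := by
  simp only [losses, winsOver, card_filter]
  rw [sum_comm]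
  refine sum_congr rfl fun ⟨⟨a, b⟩, hab⟩ _ => ?_
  cases r ⟨(a, b), hab⟩ <;> by_cases ha : a = i <;> by_cases hb : b = i <;> simp_all

theorem draws_eq_sum_drawsWith (i : Fin n) : draws r i = ∑ j, drawsWith r i j := by
  simp only [draws, drawsWith, card_filter]
  rw [sum_comm]
  refine sum_congr rfl fun ⟨⟨a, b⟩, hab⟩ _ => ?_
  cases r ⟨(a, b), hab⟩ <;> by_cases ha : a = i <;> by_cases hb : b = i <;> simp_all

theorem winsOver_add_winsOver_add_drawsWith (i j : Fin n) :
    winsOver r i j + winsOver r j i + drawsWith r i j = if i = j then 0 else 2 := by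
  have hmatches : winsOver r i j + winsOver r j i + drawsWith r i j =
      #{m : {p : Fin n × Fin n // p.1 ≠ p.2} |
        (m.val.1 = i ∧ m.val.2 = j) ∨ (m.val.1 = j ∧ m.val.2 = i)} := by
    simp only [winsOver, drawsWith, card_filter, ← sum_add_distrib]
    refine sum_congr rfl fun ⟨⟨a, b⟩, hab⟩ _ => ?_
    cases r ⟨(a, b), hab⟩ <;> grind
  rw [hmatches]
  split_ifs with hij
  · subst hij
    simp only [or_self, card_eq_zero, filter_eq_empty_iff]
    exact fun m _ h => m.2 (h.1.trans h.2.symm)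
  · have : ({m | (m.val.1 = i ∧ m.val.2 = j) ∨ (m.val.1 = j ∧ m.val.2 = i)} :
        Finset {p : Fin n × Fin n // p.1 ≠ p.2}) = {⟨(i, j), hij⟩, ⟨(j, i), Ne.symm hij⟩} := by
      ext ⟨⟨a, b⟩, hab⟩
      simp only [mem_filter, mem_univ, true_and, mem_insert, mem_singleton, Subtype.mk.injEq,
        Prod.mk.injEq]
    rw [this, card_pair (by simp [hij])]

theorem winsOver_self (i : Fin n) : winsOver r i i = 0 := by
  have := winsOver_add_winsOver_add_drawsWith r i i
  simp only [if_true] at this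
  omega

theorem drawsWith_self (i : Fin n) : drawsWith r i i = 0 := by
  have := winsOver_add_winsOver_add_drawsWith r i i
  simp only [if_true] at this
  omega

theorem totalPoints_eq (i : Fin n) : totalPoints r i = 3 * wins r i + draws r i := by
  simp only [totalPoints, wins, draws, card_filter, mul_sum, ← sum_add_distrib]
  refine sum_congr rfl fun ⟨⟨a, b⟩, hab⟩ _ => ?_
  cases r ⟨(a, b), hab⟩ <;> grind [homePts, awayPts]

theorem oppPoints_eq (i : Fin n) : oppPoints r i = 3 * losses r i + draws r i := by
  simp only [oppPoints, losses, draws, card_filter, mul_sum, ← sum_add_distrib]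
  refine sum_congr rfl fun ⟨⟨a, b⟩, hab⟩ _ => ?_
  cases r ⟨(a, b), hab⟩ <;> grind [homePts, awayPts]

theorem sum_winsOver_add_winsOver_add_drawsWith {S : Finset (Fin n)} {i : Fin n} (hi : i ∈ S) :
    ∑ j ∈ S, (winsOver r i j + winsOver r j i + drawsWith r i j) = 2 * (#S - 1) := by
  simp only [winsOver_add_winsOver_add_drawsWith, sum_ite, sum_const_zero, zero_add, sum_const,
    filter_ne, card_erase_of_mem hi, smul_eq_mul, mul_comm]

theorem wins_add_draws_add_losses (i : Fin n) :
    wins r i + draws r i + losses r i = 2 * (n - 1) := by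
  rw [wins_eq_sum_winsOver, draws_eq_sum_drawsWith, losses_eq_sum_winsOver,
    ← sum_add_distrib, ← sum_add_distrib]
  have := sum_winsOver_add_winsOver_add_drawsWith r (mem_univ i)
  rw [card_univ, Fintype.card_fin] at this
  rw [← this]
  exact sum_congr rfl fun j _ => by ring

def decisiveWithin (S : Finset (Fin n)) : ℕ :=
  ∑ i ∈ S, ∑ j ∈ S, winsOver r i j

theorem sum_points_within (S : Finset (Fin n)) :
    ∑ i ∈ S, ∑ j ∈ S, (3 * winsOver r i j + drawsWith r i j) =
      2 * (#S * (#S - 1)) + decisiveWithin r S := by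
  have hmatches : ∑ i ∈ S, ∑ j ∈ S, (winsOver r i j + winsOver r j i + drawsWith r i j) =
      2 * (#S * (#S - 1)) := by
    rw [sum_congr rfl fun i hi => sum_winsOver_add_winsOver_add_drawsWith r hi, sum_const,
      smul_eq_mul]
    ring
  have hswap : ∑ i ∈ S, ∑ j ∈ S, winsOver r j i = decisiveWithin r S := sum_comm
  simp only [sum_add_distrib, ← mul_sum] at hmatches ⊢
  rw [decisiveWithin] at hswap ⊢
  omega

theorem totalPoints_eq_sum (i : Fin n) :
    totalPoints r i = ∑ j, (3 * winsOver r i j + drawsWith r i j) := by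
  rw [totalPoints_eq, wins_eq_sum_winsOver, draws_eq_sum_drawsWith, mul_sum, sum_add_distrib]

theorem oppPoints_eq_sum (i : Fin n) :
    oppPoints r i = ∑ j, (3 * winsOver r j i + drawsWith r j i) := by
  simp only [oppPoints_eq, losses_eq_sum_winsOver, draws_eq_sum_drawsWith, mul_sum,
    sum_add_distrib, drawsWith_comm r i]

theorem sum_erase_totalPoints (A : Fin n) :
    ∑ i ∈ univ.erase A, totalPoints r i =
      oppPoints r A + 2 * ((n - 1) * (n - 2)) + decisiveWithin r (univ.erase A) := by
  have hsplit (i : Fin n) : totalPoints r i = 3 * winsOver r i A + drawsWith r i A +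
      ∑ j ∈ univ.erase A, (3 * winsOver r i j + drawsWith r i j) := by
    rw [totalPoints_eq_sum, ← add_sum_erase _ (fun j => 3 * winsOver r i j + drawsWith r i j)
      (mem_univ A)]
  have hA : oppPoints r A = ∑ i ∈ univ.erase A, (3 * winsOver r i A + drawsWith r i A) := by
    rw [oppPoints_eq_sum, ← add_sum_erase _ _ (mem_univ A), winsOver_self, drawsWith_self,
      mul_zero, zero_add, zero_add]
  rw [sum_congr rfl fun i _ => hsplit i, sum_add_distrib, sum_points_within, ← hA,
    card_erase_of_mem (mem_univ A), card_univ, Fintype.card_fin, Nat.sub_sub, add_assoc]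

theorem sum_erase_wins (A : Fin n) :
    ∑ i ∈ univ.erase A, wins r i = losses r A + decisiveWithin r (univ.erase A) := by
  have hsplit (i : Fin n) : wins r i = winsOver r i A + ∑ j ∈ univ.erase A, winsOver r i j := by
    rw [wins_eq_sum_winsOver, add_sum_erase _ _ (mem_univ A)]
  rw [sum_congr rfl fun i _ => hsplit i, sum_add_distrib, losses_eq_sum_winsOver,
    ← add_sum_erase _ _ (mem_univ A), winsOver_self, zero_add, decisiveWithin]

theorem sum_losses_eq_sum_wins : ∑ i, losses r i = ∑ i, wins r i := by
  simp only [wins_eq_sum_winsOver, losses_eq_sum_winsOver]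
  exact sum_comm

end Pairwise

section Tied

variable {n : ℕ} {r : LeagueOutcome n} {p : ℕ}

theorem two_mul_wins_add_eq (htied : ∀ i, totalPoints r i = p) (i : Fin n) :
    2 * wins r i + 2 * (n - 1) = p + losses r i := by
  have := totalPoints_eq r i
  have := wins_add_draws_add_losses r i
  have := htied i
  omega

theorem wins_add_losses_add_decisiveWithin_eq (htied : ∀ i, totalPoints r i = p) (A : Fin n) :
    wins r A + losses r A + decisiveWithin r (univ.erase A) + n * (2 * (n - 1)) = n * p := by
  have hsum := sum_congr rfl fun i (_ : i ∈ univ) => two_mul_wins_add_eq htied i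
  simp only [sum_add_distrib, ← mul_sum, sum_const, card_univ, Fintype.card_fin, smul_eq_mul,
    sum_losses_eq_sum_wins] at hsum
  rw [← add_sum_erase _ _ (mem_univ A), sum_erase_wins] at hsum
  linarith

theorem le_losses_add_decisiveWithin (htied : ∀ i, totalPoints r i = p) (hp : 2 * n - 1 ≤ p)
    (A : Fin n) : n - 1 ≤ losses r A + decisiveWithin r (univ.erase A) := by
  have hwin (i : Fin n) (_ : i ∈ univ.erase A) : 1 ≤ wins r i := by
    have := two_mul_wins_add_eq htied i
    have := i.pos
    omega
  have := card_nsmul_le_sum _ _ _ hwin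
  rwa [sum_erase_wins, card_erase_of_mem (mem_univ A), card_univ, Fintype.card_fin,
    smul_eq_mul, mul_one] at this

theorem decisiveWithin_ge_of_draws_eq_zero (htied : ∀ i, totalPoints r i = 2 * n) (A : Fin n)
    (hA : draws r A = 0) : 2 * (n - 1) ≤ 3 * decisiveWithin r (univ.erase A) := by
  -- a team with no win outside `A` must beat `A` twice and lose twice outside `A`
  have hteam (i : Fin n) (hi : i ∈ univ.erase A) :
      2 ≤ ∑ j ∈ univ.erase A, winsOver r j i + 2 * ∑ j ∈ univ.erase A, winsOver r i j := by
    have hW : wins r i = winsOver r i A + ∑ j ∈ univ.erase A, winsOver r i j := by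
      rw [wins_eq_sum_winsOver, add_sum_erase _ _ (mem_univ A)]
    have hL : losses r i = winsOver r A i + ∑ j ∈ univ.erase A, winsOver r j i := by
      rw [losses_eq_sum_winsOver, ← add_sum_erase _ (winsOver r · i) (mem_univ A)]
    have hdraw : drawsWith r i A = 0 := by
      rw [draws_eq_sum_drawsWith, sum_eq_zero_iff] at hA
      rw [drawsWith_comm, hA i (mem_univ i)]
    have hpair := winsOver_add_winsOver_add_drawsWith r i A
    rw [if_neg (ne_of_mem_erase hi)] at hpair
    have := two_mul_wins_add_eq htied i
    have := i.pos
    rcases Nat.eq_zero_or_pos (∑ j ∈ univ.erase A, winsOver r i j) with _ | _ <;> omega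
  have hsum := sum_le_sum hteam
  rw [sum_add_distrib, ← mul_sum, sum_comm, sum_const, card_erase_of_mem (mem_univ A),
    card_univ, Fintype.card_fin, smul_eq_mul] at hsum
  rw [decisiveWithin]
  omega

theorem three_le_decisiveWithin (hn : 5 ≤ n) (htied : ∀ i, totalPoints r i = p)
    (hp : 2 * n - 1 ≤ p) (A : Fin n) : 3 ≤ decisiveWithin r (univ.erase A) := by
  obtain ⟨q, rfl⟩ : ∃ q, p = 2 * (n - 1) + q := ⟨p - 2 * (n - 1), by omega⟩
  have hdecisive := wins_add_losses_add_decisiveWithin_eq htied A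
  rw [mul_add] at hdecisive
  have hteamA := two_mul_wins_add_eq htied A
  have hmatchesA := wins_add_draws_add_losses r A
  have hothers := le_losses_add_decisiveWithin htied hp A
  rcases q with _ | _ | _ | q
  · omega
  · omega
  · by_contra hlt
    have hdraws : draws r A = 0 := by omega
    have htied' : ∀ i, totalPoints r i = 2 * n := fun i => by rw [htied]; omega
    have := decisiveWithin_ge_of_draws_eq_zero htied' A hdraws
    omega
  · have := Nat.mul_le_mul_left n (show 3 ≤ q + 1 + 1 + 1 by omega)
    omega

end Tied

/-- for `n ≥ 5`, in a league tied with common score `p ≥ 2n−1`,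
`(n−1)·p − P̄(A) ≥ 2(n−1)(n−2) + 3` for every team `A`. -/
theorem tied_first_constraint (n : ℕ) (hn : 5 ≤ n) (r : LeagueOutcome n) (p : ℕ)
    (h : ∀ i, totalPoints r i = p) (hp : 2 * n - 1 ≤ p) :
    ∀ A : Fin n,
      2 * ((n : ℤ) - 1) * ((n : ℤ) - 2) + 3 ≤
        ((n : ℤ) - 1) * (p : ℤ) - (oppPoints r A : ℤ) := by
  intro A
  have hothers := sum_erase_totalPoints r A
  rw [sum_congr rfl fun i _ => h i, sum_const, card_erase_of_mem (mem_univ A), card_univ,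
    Fintype.card_fin, smul_eq_mul] at hothers
  have hdecisive := three_le_decisiveWithin hn h hp A
  zify [show 1 ≤ n by omega, show 2 ≤ n by omega] at hothers hdecisive
  linarith
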